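/- In a dual weak brace S, the annihilator Ann(S) = {a ∈ S : a + b = b + a = a ∘ b = b ∘ a for all b ∈ S} is an ideal of S: it contains E(S), is a normal subsemigroup of both (S,+) and (S,∘), and is λ-invariant. -/

import Mathlib

/-!
Both `(S,+)` and `(S,∘)` are inverse semigroups whose idempotents are central: for `∘` this is
the Clifford hypothesis, for `+` it follows from `a⁰ + a ∘ b = a ∘ b`, which forces
`a - a = -a + a`. Moreover an idempotent `e` satisfies `e ∘ b = e + b`, so idempotents lie in
`Ann(S)`, and every closure property of `Ann(S)` reduces to rewriting the element in question as a
sum of annihilator elements and idempotents, e.g. `-a + x + a = x + (-a + a)` and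
`a⁻ ∘ x ∘ a = (-a + a) + x`.
-/

/-- A weak brace: `(S,+)` and `(S,∘)` are inverse semigroups satisfying
`a ∘ (b + c) = a ∘ b - a + a ∘ c` and `a ∘ a⁻ = -a + a`. -/
class WeakBrace (S : Type*) where
  add : S → S → S
  mul : S → S → S
  neg : S → S
  inv : S → S
  add_assoc : ∀ a b c : S, add (add a b) c = add a (add b c)
  mul_assoc : ∀ a b c : S, mul (mul a b) c = mul a (mul b c)
  add_reg : ∀ a : S, add (add a (neg a)) a = a
  neg_reg : ∀ a : S, add (add (neg a) a) (neg a) = neg a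
  neg_unique : ∀ a x : S, add (add a x) a = a → add (add x a) x = x → x = neg a
  mul_reg : ∀ a : S, mul (mul a (inv a)) a = a
  inv_reg : ∀ a : S, mul (mul (inv a) a) (inv a) = inv a
  inv_unique : ∀ a x : S, mul (mul a x) a = a → mul (mul x a) x = x → x = inv a
  distrib : ∀ a b c : S, mul a (add b c) = add (add (mul a b) (neg a)) (mul a c)
  link : ∀ a : S, mul a (inv a) = add (neg a) a

/-- A dual weak brace: a weak brace whose multiplicative semigroup is Clifford. -/
class DualWeakBrace (S : Type*) extends WeakBrace S where
  clifford : ∀ a : S, WeakBrace.mul a (WeakBrace.inv a) = WeakBrace.mul (WeakBrace.inv a) a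

namespace WeakBrace

variable {S : Type*} [WeakBrace S]

/-- `λ_a(b) = -a + a ∘ b`. -/
def lam (a b : S) : S := add (neg a) (mul a b)

/-- `ρ_b(a) = (-a + a ∘ b)⁻ ∘ a ∘ b`. -/
def rho (b a : S) : S := mul (mul (inv (lam a b)) a) b

/-- `a · b = -a + a ∘ b - b`. -/
def cdot (a b : S) : S := add (add (neg a) (mul a b)) (neg b)

/-- `a⁰ = a - a`. -/
def sq (a : S) : S := add a (neg a)

/-- Additive idempotent (the sets of idempotents of `+` and `∘` coincide). -/
def IsIdem (e : S) : Prop := add e e = e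

/-- `[a,b]₊ = -a - b + a + b`. -/
def brkt (a b : S) : S := add (add (add (neg a) (neg b)) a) b

/-- `I` is a full inverse subsemigroup of `(S,+)`. -/
def IsFullAddSub (I : Set S) : Prop :=
  (∀ e : S, IsIdem e → e ∈ I) ∧ (∀ x ∈ I, ∀ y ∈ I, add x y ∈ I) ∧ (∀ x ∈ I, neg x ∈ I)

/-- `I` is a normal subsemigroup of `(S,+)`. -/
def IsNormalAdd (I : Set S) : Prop :=
  IsFullAddSub I ∧ ∀ a : S, ∀ x ∈ I, add (add (neg a) x) a ∈ I

/-- `I` is a normal subsemigroup of `(S,∘)`. -/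
def IsNormalMul (I : Set S) : Prop :=
  (∀ e : S, IsIdem e → e ∈ I) ∧ (∀ x ∈ I, ∀ y ∈ I, mul x y ∈ I) ∧ (∀ x ∈ I, inv x ∈ I) ∧
    ∀ a : S, ∀ x ∈ I, mul (mul (inv a) x) a ∈ I

/-- `I` is a left ideal of the weak brace `S`. -/
def IsLeftIdeal (I : Set S) : Prop :=
  IsFullAddSub I ∧ ∀ a : S, ∀ x ∈ I, lam a x ∈ I

/-- `I` is an ideal of the weak brace `S`. -/
def IsIdeal (I : Set S) : Prop :=
  IsNormalAdd I ∧ (∀ a : S, ∀ x ∈ I, lam a x ∈ I) ∧ IsNormalMul I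

/-- The socle `Soc(S)`. -/
def Soc (S : Type*) [WeakBrace S] : Set S :=
  {a | ∀ b : S, add a b = mul a b ∧ add a b = add b a}

/-- The annihilator `Ann(S)`. -/
def Ann (S : Type*) [WeakBrace S] : Set S :=
  {a | ∀ b : S, add a b = add b a ∧ add a b = mul a b ∧ mul a b = mul b a}

/-- The congruence `a ∼_I b ⟺ a⁰ = b⁰ and -a + b ∈ I` associated to an ideal `I`. -/
def simI (I : Set S) (a b : S) : Prop := sq a = sq b ∧ add (neg a) b ∈ I

/-- Membership in the inverse subsemigroup of `(S,+)` generated by a set `X`. -/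
inductive genAdd (X : Set S) : S → Prop
  | base : ∀ x ∈ X, genAdd X x
  | add : ∀ a b : S, genAdd X a → genAdd X b → genAdd X (add a b)
  | neg : ∀ a : S, genAdd X a → genAdd X (neg a)

/-- `X · Y`: the additive inverse subsemigroup generated by the elements `x · y`. -/
def cdotSet (X Y : Set S) : Set S :=
  {s | genAdd {z | ∃ x ∈ X, ∃ y ∈ Y, z = cdot x y} s}

/-- `S^(n)` for `n ≥ 1`: `S^(1) = S`, `S^(n+1) = S^(n) · S`. -/
def Spow (S : Type*) [WeakBrace S] : ℕ → Set S
  | 0 => Set.univ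
  | 1 => Set.univ
  | (n+2) => cdotSet (Spow S (n+1)) Set.univ

end WeakBrace

structure IsInverseSemigroup {T : Type*} (op : T → T → T) (inv : T → T) : Prop where
  assoc : ∀ a b c, op (op a b) c = op a (op b c)
  op_inv_op : ∀ a, op (op a (inv a)) a = a
  inv_op_inv : ∀ a, op (op (inv a) a) (inv a) = inv a
  inv_unique : ∀ a x, op (op a x) a = a → op (op x a) x = x → x = inv a

namespace IsInverseSemigroup

variable {T : Type*} {op : T → T → T} {inv : T → T} (h : IsInverseSemigroup op inv)
include h

theorem inv_inv (a : T) : inv (inv a) = a :=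
  (h.inv_unique _ _ (h.inv_op_inv a) (h.op_inv_op a)).symm

theorem inv_eq_self {e : T} (he : op e e = e) : inv e = e :=
  (h.inv_unique e e (by rw [he, he]) (by rw [he, he])).symm

theorem op_inv_idem (a : T) : op (op a (inv a)) (op a (inv a)) = op a (inv a) := by
  rw [← h.assoc, h.op_inv_op]

theorem inv_op_idem (a : T) : op (op (inv a) a) (op (inv a) a) = op (inv a) a := by
  rw [← h.assoc, h.inv_op_inv]

theorem op_idem {e f : T} (he : op e e = e) (hf : op f f = f) :
    op (op e f) (op e f) = op e f := by
  have hee : ∀ z, op e (op e z) = op e z := fun z => by rw [← h.assoc, he]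
  have hff : ∀ z, op f (op f z) = op f z := fun z => by rw [← h.assoc, hf]
  set x := inv (op e f)
  have hx : ∀ z, op x (op e (op f (op x z))) = op x z := fun z => by
    simpa only [h.assoc] using congrArg (op · z) (h.inv_op_inv (op e f))
  have hef : op e (op f (op x (op e f))) = op e f := by
    simpa only [h.assoc] using h.op_inv_op (op e f)
  -- `f x e` is also an inverse of `e f`, so it equals `x`, which makes `x` idempotent.
  have hfxe : op f (op x e) = x :=
    h.inv_unique _ _ (by simp only [h.assoc, hff, hee, hef])
      (by simp only [h.assoc, hee, hff, hx])
  have hxx : op x x = x := by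
    conv_lhs => rw [← hfxe]
    simp only [h.assoc]
    rw [hx, hfxe]
  have hefx : op e f = inv x :=
    h.inv_unique x (op e f) (h.inv_op_inv (op e f)) (h.op_inv_op (op e f))
  rw [hefx, h.inv_eq_self hxx, hxx]

theorem idem_comm {e f : T} (he : op e e = e) (hf : op f f = f) : op e f = op f e := by
  have hee : ∀ z, op e (op e z) = op e z := fun z => by rw [← h.assoc, he]
  have hff : ∀ z, op f (op f z) = op f z := fun z => by rw [← h.assoc, hf]
  have hef : op e (op f (op e f)) = op e f := by simpa only [h.assoc] using h.op_idem he hf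
  have hfe : op f (op e (op f e)) = op f e := by simpa only [h.assoc] using h.op_idem hf he
  have hinv : op f e = inv (op e f) :=
    h.inv_unique _ _ (by simp only [h.assoc, hff, hee, hef]) (by simp only [h.assoc, hee, hff, hfe])
  rw [hinv, h.inv_eq_self (h.op_idem he hf)]

theorem inv_op (a b : T) : inv (op a b) = op (inv b) (inv a) := by
  have hc := h.idem_comm (h.op_inv_idem b) (h.inv_op_idem a)
  refine (h.inv_unique _ _ ?_ ?_).symm
  · calc op (op (op a b) (op (inv b) (inv a))) (op a b)
        = op (op a (op (op b (inv b)) (op (inv a) a))) b := by simp only [h.assoc]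
      _ = op (op (op a (inv a)) a) (op (op b (inv b)) b) := by rw [hc]; simp only [h.assoc]
      _ = op a b := by rw [h.op_inv_op, h.op_inv_op]
  · calc op (op (op (inv b) (inv a)) (op a b)) (op (inv b) (inv a))
        = op (op (inv b) (op (op (inv a) a) (op b (inv b)))) (inv a) := by simp only [h.assoc]
      _ = op (op (op (inv b) b) (inv b)) (op (op (inv a) a) (inv a)) := by
        rw [← hc]; simp only [h.assoc]
      _ = op (inv b) (inv a) := by rw [h.inv_op_inv, h.inv_op_inv]

theorem idem_central (hc : ∀ a, op a (inv a) = op (inv a) a) {e : T} (he : op e e = e) (a : T) :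
    op e a = op a e := by
  have hf := h.idem_comm he (h.op_inv_idem a)
  -- Both `a⁻¹ (e a)` and `e (a a⁻¹)` are the idempotent `(e a)(e a)⁻¹` of the Clifford semigroup.
  have key : op (inv a) (op e a) = op e (op a (inv a)) :=
    calc op (inv a) (op e a) = op (inv (op e a)) (op e a) := by
          rw [h.inv_op, h.inv_eq_self he, h.assoc, ← h.assoc e e, he]
      _ = op (op e a) (inv (op e a)) := (hc _).symm
      _ = op e (op (op a (inv a)) e) := by
          rw [h.inv_op, h.inv_eq_self he]; simp only [h.assoc]
      _ = op e (op a (inv a)) := by rw [← hf, ← h.assoc, he]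
  calc op e a = op (op (op a (inv a)) e) a := by rw [← hf, h.assoc, h.op_inv_op]
    _ = op a (op e (op a (inv a))) := by rw [← key]; simp only [h.assoc]
    _ = op a e := by rw [hf, hc a, ← h.assoc, ← h.assoc, h.op_inv_op]

end IsInverseSemigroup

namespace WeakBrace

section
variable {S : Type*} [WeakBrace S]

theorem isInverseSemigroup_add : IsInverseSemigroup (add : S → S → S) neg :=
  ⟨add_assoc, add_reg, neg_reg, neg_unique⟩

theorem isInverseSemigroup_mul : IsInverseSemigroup (mul : S → S → S) inv :=
  ⟨mul_assoc, mul_reg, inv_reg, inv_unique⟩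

theorem neg_neg (a : S) : neg (neg a) = a := isInverseSemigroup_add.inv_inv a

theorem neg_add (a b : S) : neg (add a b) = add (neg b) (neg a) := isInverseSemigroup_add.inv_op a b

theorem inv_inv (a : S) : inv (inv a) = a := isInverseSemigroup_mul.inv_inv a

theorem inv_mul (a b : S) : inv (mul a b) = mul (inv b) (inv a) := isInverseSemigroup_mul.inv_op a b

theorem isIdem_sq (a : S) : IsIdem (sq a) := isInverseSemigroup_add.op_inv_idem a

theorem isIdem_neg_add (a : S) : IsIdem (add (neg a) a) := isInverseSemigroup_add.inv_op_idem a

theorem IsIdem.neg_eq {e : S} (he : IsIdem e) : neg e = e := isInverseSemigroup_add.inv_eq_self he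

theorem sq_add (a : S) : add (sq a) a = a := add_reg a

theorem neg_add_sq (a : S) : add (neg a) (sq a) = neg a := by rw [sq, ← add_assoc, neg_reg]

theorem distrib' (a b c : S) : add (mul a b) (add (neg a) (mul a c)) = mul a (add b c) := by
  rw [distrib, add_assoc]

theorem distrib_add (a b c z : S) :
    add (mul a b) (add (neg a) (add (mul a c) z)) = add (mul a (add b c)) z := by
  rw [distrib, add_assoc, add_assoc]

theorem neg_mul_eq (a b : S) : neg (mul a b) = add (neg a) (add (mul a (neg b)) (neg a)) := by
  refine (neg_unique _ _ ?_ ?_).symm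
  · simp only [add_assoc]
    rw [distrib_add, distrib', add_reg]
  · simp only [add_assoc]
    rw [distrib_add, distrib_add, neg_reg]

theorem sq_mul (a b : S) : sq (mul a b) = add (mul a (sq b)) (neg a) := by
  rw [sq, neg_mul_eq, distrib_add, sq]

theorem sq_add_mul (a b : S) : add (sq a) (mul a b) = mul a b := by
  have h : add (sq (mul a b)) (sq a) = sq (mul a b) := by
    rw [sq_mul, add_assoc, neg_add_sq]
  calc add (sq a) (mul a b) = add (add (sq a) (sq (mul a b))) (mul a b) := by
        rw [add_assoc, sq_add]
    _ = mul a b := by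
        rw [isInverseSemigroup_add.idem_comm (isIdem_sq a) (isIdem_sq _), h, sq_add]

theorem add_lam (a b : S) : add a (lam a b) = mul a b := by
  rw [lam, ← add_assoc, ← sq, sq_add_mul]

theorem sq_eq_neg_add (a : S) : sq a = add (neg a) a := by
  have h1 : add (sq a) (add (neg a) a) = add (neg a) a := by
    rw [← link, sq_add_mul]
  have h2 : add (add (neg a) a) (sq a) = sq a := by
    simpa only [link, sq, neg_neg] using sq_add_mul (neg a) (inv (neg a))
  rw [← h2, isInverseSemigroup_add.idem_comm (isIdem_neg_add a) (isIdem_sq a), h1]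

theorem IsIdem.add_comm {e : S} (he : IsIdem e) (b : S) : add e b = add b e :=
  isInverseSemigroup_add.idem_central sq_eq_neg_add he b

theorem IsIdem.add_mul {e : S} (he : IsIdem e) (b : S) : add e (mul e b) = mul e b := by
  have h := sq_add_mul e b
  rwa [sq, he.neg_eq, he] at h

theorem IsIdem.mul_add {e : S} (he : IsIdem e) (b c : S) :
    mul e (add b c) = add (mul e b) (mul e c) := by
  rw [distrib, he.neg_eq, add_assoc, he.add_mul]

theorem IsIdem.mul_self {e : S} (he : IsIdem e) : mul e e = e := by
  have h : mul e (inv e) = e := by rw [link, he.neg_eq, he]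
  simpa only [h] using mul_reg e

theorem IsIdem.isIdem_lam {e : S} (he : IsIdem e) (b : S) : IsIdem (lam b e) := by
  show add (lam b e) (lam b e) = lam b e
  rw [lam, add_assoc, distrib', he]

end

section
variable {S : Type*} [DualWeakBrace S]

theorem IsIdem.mul_comm {e : S} (he : IsIdem e) (b : S) : mul e b = mul b e :=
  isInverseSemigroup_mul.idem_central DualWeakBrace.clifford he.mul_self b

theorem IsIdem.mul_eq_add_of_isIdem {e f : S} (he : IsIdem e) (hf : IsIdem f) :
    mul e f = add e f := by
  -- `g = e + f` is idempotent, so `g = g ∘ g = g ∘ e + g ∘ f`, and both summands are `e ∘ f`.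
  have hg : IsIdem (add e f) := isInverseSemigroup_add.op_idem he hf
  have hge : mul (add e f) e = mul e f := by
    rw [← he.mul_comm, he.mul_add, he.mul_self, he.add_mul]
  have hgf : mul (add e f) f = mul e f := by
    rw [← hf.mul_comm, hf.mul_add, hf.mul_self, ← hf.add_comm, hf.add_mul, ← he.mul_comm]
  calc mul e f = add (mul e f) (mul e f) := by rw [← he.mul_add, hf]
    _ = add e f := by nth_rw 1 [← hge]; rw [← hgf, ← hg.mul_add, hg.mul_self]

theorem IsIdem.mul_eq_add {e : S} (he : IsIdem e) (b : S) : mul e b = add e b := by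
  -- `e ∘ b = e + b ∘ e = e + b + λ_b(e)` differs from `e + b` by the idempotent `i = λ_b(e)`,
  -- which is absorbed by `(e ∘ b)⁰ = e + b⁰`, hence also by `e + b`.
  set i := lam b e
  have hi : IsIdem i := he.isIdem_lam b
  have h1 : mul e b = add i (add e b) := by
    rw [← he.add_mul, he.mul_comm, ← add_lam, ← hi.add_comm, ← add_assoc, ← add_assoc, he.add_comm i]
  have h2 : add i (mul e b) = mul e b := by rw [h1, ← add_assoc, hi]
  have h3 : sq (mul e b) = add e (sq b) := by
    rw [sq_mul, he.neg_eq, ← he.add_comm, he.add_mul, he.mul_eq_add_of_isIdem (isIdem_sq b)]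
  have h4 : add i (add e (sq b)) = add e (sq b) := by
    rw [← h3, sq, ← add_assoc, h2]
  rw [h1, ← sq_add b, ← add_assoc e, ← add_assoc i, h4]

theorem IsIdem.mem_ann {e : S} (he : IsIdem e) : e ∈ Ann S :=
  fun b => ⟨he.add_comm b, (he.mul_eq_add b).symm, he.mul_comm b⟩

theorem add_mem_ann {x y : S} (hx : x ∈ Ann S) (hy : y ∈ Ann S) : add x y ∈ Ann S := by
  intro b
  have hmul : add (add x y) b = mul (add x y) b := by
    rw [add_assoc, (hy b).2.1, (hx _).2.1, ← mul_assoc, (hx y).2.1]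
  refine ⟨by rw [add_assoc, (hy b).1, ← add_assoc, (hx b).1, add_assoc], hmul, ?_⟩
  calc mul (add x y) b = add (add x y) b := hmul.symm
    _ = add x (add y (add (sq b) b)) := by rw [sq_add, add_assoc]
    _ = add (add (add x b) (neg b)) (add y b) := by
        rw [← add_assoc y, ← (isIdem_sq b).add_comm, add_assoc, sq]
        simp only [add_assoc]
    _ = mul b (add x y) := by
        rw [distrib, ← (hx b).2.2, ← (hy b).2.2, ← (hx b).2.1, ← (hy b).2.1]

theorem inv_eq_neg_of_mem_ann {x : S} (hx : x ∈ Ann S) : inv x = neg x := by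
  refine (inv_unique x (neg x) ?_ ?_).symm
  · rw [← (hx (neg x)).2.1, ← sq, (isIdem_sq x).mul_eq_add, sq_add]
  · rw [← (hx (neg x)).2.2, ← (hx (neg x)).2.1, ← sq, (isIdem_sq x).mul_eq_add, sq_eq_neg_add,
      neg_reg]

theorem neg_mem_ann {x : S} (hx : x ∈ Ann S) : neg x ∈ Ann S := by
  intro b
  have hsq : mul (sq x) (neg x) = neg x := by
    rw [(isIdem_sq x).mul_eq_add, sq_eq_neg_add, neg_reg]
  refine ⟨?_, ?_, ?_⟩
  · rw [← neg_neg b, ← neg_add, ← (hx (neg b)).1, neg_add]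
  · calc add (neg x) b = add (neg x) (mul (sq x) b) := by
          rw [(isIdem_sq x).mul_eq_add, ← add_assoc, neg_add_sq]
      _ = add (neg x) (add x (mul (neg x) b)) := by
          rw [(hx _).2.1, ← mul_assoc, ← (hx (neg x)).2.1, sq]
      _ = mul (neg x) b := by
          rw [← add_assoc, ← sq_eq_neg_add, ← (isIdem_sq x).mul_eq_add, ← mul_assoc, hsq]
  · rw [← inv_eq_neg_of_mem_ann hx, ← inv_inv b, ← inv_mul, ← (hx (inv b)).2.2, inv_mul]

theorem neg_add_add_mem_ann (a : S) {x : S} (hx : x ∈ Ann S) : add (add (neg a) x) a ∈ Ann S := by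
  rw [← (hx (neg a)).1, add_assoc]
  exact add_mem_ann hx (isIdem_neg_add a).mem_ann

theorem lam_mem_ann (a : S) {x : S} (hx : x ∈ Ann S) : lam a x ∈ Ann S := by
  rw [lam, ← (hx a).2.2, ← (hx a).2.1, (hx a).1, ← add_assoc]
  exact add_mem_ann (isIdem_neg_add a).mem_ann hx

theorem mul_mem_ann {x y : S} (hx : x ∈ Ann S) (hy : y ∈ Ann S) : mul x y ∈ Ann S := by
  rw [← (hx y).2.1]
  exact add_mem_ann hx hy

theorem inv_mem_ann {x : S} (hx : x ∈ Ann S) : inv x ∈ Ann S := by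
  rw [inv_eq_neg_of_mem_ann hx]
  exact neg_mem_ann hx

theorem inv_mul_mul_mem_ann (a : S) {x : S} (hx : x ∈ Ann S) : mul (mul (inv a) x) a ∈ Ann S := by
  rw [mul_assoc, (hx a).2.2, ← mul_assoc, ← DualWeakBrace.clifford, link,
    (isIdem_neg_add a).mul_eq_add]
  exact add_mem_ann (isIdem_neg_add a).mem_ann hx

end

end WeakBrace

open WeakBrace
theorem stmt16 {S : Type*} [DualWeakBrace S] : IsIdeal (Ann S) :=
  ⟨⟨⟨fun _ he => he.mem_ann, fun _ hx _ hy => add_mem_ann hx hy, fun _ hx => neg_mem_ann hx⟩,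
      fun a _ hx => neg_add_add_mem_ann a hx⟩,
    fun a _ hx => lam_mem_ann a hx,
    fun _ he => he.mem_ann, fun _ hx _ hy => mul_mem_ann hx hy, fun _ hx => inv_mem_ann hx,
    fun a _ hx => inv_mul_mul_mem_ann a hx⟩
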